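/- arXiv:2006.03862 — 2 statements merged into one kernel-verified Lean document; each statement's English description precedes it below -/
import Mathlib

section
/- Let Π be the two-phase reach-avoid problem on transition system S = (X,U,F) with running cost g, associated with nonempty sets A₁, A₂ ⊆ X and G₀ : X → [0,∞]. Let Π₂ = (X,U,F,G₂,g) be the reach-avoid problem associated with A₂ and G₀, with closed-loop performance L₂, and let μ₂ be a memoryless controller that is optimal for Π₂. Let Π₁ = (X,U,F,G₁,g) be the reach-avoid problem associated with A₁ and terminal cost L₂(·,μ₂), and let μ₁ be a memoryless controller with single-valued stopping component that is optimal for Π₁. Let μ be the controller defined by μ(x|[0;t], u|[0;t)) = μ₁(x(t)) if the stopping signal w of μ₁ along x satisfies w(s) = 0 for all s ∈ [0;t], and μ(x|[0;t], u|[0;t)) = μ₂(x(t)) otherwise. Then μ is optimal for Π, i.e. L(p,μ) = V(p) for all p ∈ X, where L and V are the closed-loop performance and value function of Π. -/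
open scoped ENNReal Classical

namespace TwoPhase

noncomputable section

variable {X U : Type*}

/-- The behaviour of the transition system `(X, U, F)` initialized at `p`:
`x 0 = p` and `x (t+1) ∈ F (x t) (u t)` for all `t`. -/
def Behaviour (F : X → U → Set X) (p : X) (u : ℕ → U) (x : ℕ → X) : Prop :=
  x 0 = p ∧ ∀ t, x (t + 1) ∈ F (x t) (u t)

/-- A general (history-dependent) controller, encoded as a map depending on the
time `t` and the full signals, required to be strict (nonempty valued) and causal:
its value at time `t` only depends on `x|[0;t]` and `u|[0;t)`. -/
def IsController (μ : ℕ → (ℕ → X) → (ℕ → U) → Set (U × Bool)) : Prop :=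
  (∀ t x u, (μ t x u).Nonempty) ∧
    ∀ (t : ℕ) (x x' : ℕ → X) (u u' : ℕ → U),
      (∀ s ≤ t, x s = x' s) → (∀ s < t, u s = u' s) → μ t x u = μ t x' u'

/-- The history-dependent controller induced by a memoryless controller. -/
def ofMemoryless (μ : X → Set (U × Bool)) : ℕ → (ℕ → X) → (ℕ → U) → Set (U × Bool) :=
  fun t x _ => μ (x t)

/-- The closed-loop behaviour `B_p(μ × S)`. -/
def ClosedLoop (F : X → U → Set X) (μ : ℕ → (ℕ → X) → (ℕ → U) → Set (U × Bool))
    (p : X) (u : ℕ → U) (v : ℕ → Bool) (x : ℕ → X) : Prop :=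
  Behaviour F p u x ∧ ∀ t, (u t, v t) ∈ μ t x u

/-- The total cost `J(u,v,x)` associated with running cost `g` and
trajectory cost `G` (where `G T x` is the cost of the finite trajectory `x|[0;T]`):
if `v` is not identically `0` and `T = min v⁻¹(1)`, it is
`∑_{t<T} g (x t) (x (t+1)) (u t) + G T x`; otherwise it is `∞`. -/
def totalCost (g : X → X → U → ℝ≥0∞) (G : ℕ → (ℕ → X) → ℝ≥0∞)
    (u : ℕ → U) (v : ℕ → Bool) (x : ℕ → X) : ℝ≥0∞ :=
  if h : ∃ t, v t = true then
    (∑ t ∈ Finset.range (Nat.find h), g (x t) (x (t + 1)) (u t)) + G (Nat.find h) x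
  else ⊤

/-- The closed-loop performance `L(p, μ)` of the optimal control problem
`(X, U, F, G, g)`. -/
def perf (F : X → U → Set X) (g : X → X → U → ℝ≥0∞) (G : ℕ → (ℕ → X) → ℝ≥0∞)
    (μ : ℕ → (ℕ → X) → (ℕ → U) → Set (U × Bool)) (p : X) : ℝ≥0∞ :=
  ⨆ (u : ℕ → U) (v : ℕ → Bool) (x : ℕ → X) (_ : ClosedLoop F μ p u v x),
    totalCost g G u v x

/-- The value function `V(p)` of the optimal control problem `(X, U, F, G, g)`. -/
def value (F : X → U → Set X) (g : X → X → U → ℝ≥0∞) (G : ℕ → (ℕ → X) → ℝ≥0∞)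
    (p : X) : ℝ≥0∞ :=
  ⨅ (μ : ℕ → (ℕ → X) → (ℕ → U) → Set (U × Bool)) (_ : IsController μ),
    perf F g G μ p

/-- The (terminal) trajectory cost of the reach-avoid problem associated with `A`
and `G₀`. -/
def reachAvoidCost (A : Set X) (G₀ : X → ℝ≥0∞) : ℕ → (ℕ → X) → ℝ≥0∞ :=
  fun T x => if x T ∈ A then G₀ (x T) else ⊤

/-- The trajectory cost of the two-phase reach-avoid problem associated with
`A₁`, `A₂` and `G₀`. -/
def twoPhaseCost (A₁ A₂ : Set X) (G₀ : X → ℝ≥0∞) : ℕ → (ℕ → X) → ℝ≥0∞ :=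
  fun t x => if (∃ s ≤ t, x s ∈ A₁) ∧ x t ∈ A₂ then G₀ (x t) else ⊤

/-- A trajectory cost which is a terminal cost `G : X → [0,∞]`. -/
def termCost (G : X → ℝ≥0∞) : ℕ → (ℕ → X) → ℝ≥0∞ := fun T x => G (x T)

/-- The stopping component of a memoryless controller is single-valued. -/
def SVStop (μ : X → Set (U × Bool)) : Prop :=
  ∀ q : X, (∀ w ∈ μ q, w.2 = false) ∨ (∀ w ∈ μ q, w.2 = true)

/-- The composed controller `μ` of Proposition 1: it plays `μ₁` as long as the
stopping signal `w` of `μ₁` along `x` satisfies `w s = 0` for all `s ∈ [0;t]`,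
and plays `μ₂` afterwards. -/
def composed (μ₁ μ₂ : X → Set (U × Bool)) :
    ℕ → (ℕ → X) → (ℕ → U) → Set (U × Bool) :=
  fun t x _ =>
    if ∀ s ≤ t, ∀ w ∈ μ₁ (x s), w.2 = false then μ₁ (x t) else μ₂ (x t)

/-- The refined controller `μ' ∘ Q` of a memoryless abstract controller `μ'`,
where `Q` is the quantizer: `(μ' ∘ Q) p = ⋃_{Ω ∈ X', p ∈ Ω} μ' Ω`. -/
def refineCtrl {XA : Set (Set X)} {UA : Set U} (μ' : ↥XA → Set (↥UA × Bool)) :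
    X → Set (U × Bool) :=
  fun p => ⋃ (Ω : ↥XA) (_ : p ∈ (Ω : Set X)),
    (fun w : ↥UA × Bool => ((w.1 : U), w.2)) '' μ' Ω

end

end TwoPhase

/-!
The composed controller `μ` does at least as well on the two-phase problem as `μ₁` does on `Π₁`:
until `μ₁` stops it plays `μ₁`, and from the stopping time `T` on it plays `μ₂`, whose cost from
`x T` is at most `L₂(x T, μ₂)`, the terminal cost of `Π₁` (which is `∞` unless `x T ∈ A₁`).
Conversely, any controller `ν` for `Π` yields a controller for `Π₁` by stopping at the first entry
time `s` into `A₁`; after `s`, `ν` restarted at time `s` is a controller for `Π₂`, so its remaining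
cost is at least `V₂(x s) = L₂(x s, μ₂)`. Hence `L(·, μ) ≤ L₁(·, μ₁) = V₁ ≤ V`.
-/

namespace TwoPhase

open Finset

section Signals

variable {α : Type*}

def splice (s : ℕ) (a b : ℕ → α) : ℕ → α := fun r => if r < s then a r else b (r - s)

variable {s r : ℕ} {a b : ℕ → α}

lemma splice_of_lt (h : r < s) : splice s a b r = a r := if_pos h

@[simp]
lemma splice_add (s t : ℕ) (a b : ℕ → α) : splice s a b (s + t) = b t := by
  simp [splice]

lemma splice_of_le (hb : b 0 = a s) (h : r ≤ s) : splice s a b r = a r := by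
  rcases h.lt_or_eq with h | rfl
  · exact splice_of_lt h
  · simpa using (splice_add r 0 a b).trans hb

end Signals

section

variable {X U : Type*} {F : X → U → Set X} {g : X → X → U → ℝ≥0∞}
  {G G' : ℕ → (ℕ → X) → ℝ≥0∞} {ν : ℕ → (ℕ → X) → (ℕ → U) → Set (U × Bool)}
  {p : X} {u u' : ℕ → U} {v v' : ℕ → Bool} {x x' : ℕ → X}

section TotalCost

lemma totalCost_of_forall_false (hv : ∀ t, v t = false) : totalCost g G u v x = ⊤ :=
  dif_neg (by simp [hv])

lemma totalCost_of_first_stop {T : ℕ} (hT : v T = true) (hlt : ∀ t < T, v t = false) :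
    totalCost g G u v x = ∑ t ∈ range T, g (x t) (x (t + 1)) (u t) + G T x := by
  have h : ∃ t, v t = true := ⟨T, hT⟩
  have hfind : Nat.find h = T :=
    (Nat.find_min' h hT).antisymm <| not_lt.1 fun hlt' => by
      simpa [hlt _ hlt'] using Nat.find_spec h
  rw [totalCost, dif_pos h, hfind]

lemma totalCost_eq_sum_add_totalCost_shift (s : ℕ) (hv : ∀ t < s, v t = false)
    (hG : ∀ t, G (s + t) x = G' t (fun r => x (s + r))) :
    totalCost g G u v x = ∑ t ∈ range s, g (x t) (x (t + 1)) (u t) +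
      totalCost g G' (fun t => u (s + t)) (fun t => v (s + t)) (fun t => x (s + t)) := by
  by_cases h : ∃ t, v t = true
  · have hs : s ≤ Nat.find h :=
      not_lt.1 fun hlt => by simpa [hv _ hlt] using Nat.find_spec h
    obtain ⟨n, hn⟩ := Nat.exists_eq_add_of_le hs
    have hstop : v (s + n) = true := hn ▸ Nat.find_spec h
    have hmin : ∀ t < s + n, v t = false := fun t ht => by simpa using Nat.find_min h (hn ▸ ht)
    rw [totalCost_of_first_stop hstop hmin,
      totalCost_of_first_stop (T := n) hstop fun t ht => hmin _ (by omega), sum_range_add, hG,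
      add_assoc]
    rfl
  · push Not at h
    simp only [Bool.not_eq_true] at h
    rw [totalCost_of_forall_false h, totalCost_of_forall_false fun t => h _, add_top]

end TotalCost

section Perf

lemma totalCost_le_perf (h : ClosedLoop F ν p u v x) : totalCost g G u v x ≤ perf F g G ν p :=
  le_iSup₂_of_le u v <| le_iSup₂_of_le x h le_rfl

lemma perf_le {c : ℝ≥0∞} (h : ∀ u v x, ClosedLoop F ν p u v x → totalCost g G u v x ≤ c) :
    perf F g G ν p ≤ c :=
  iSup₂_le fun u v => iSup₂_le fun x hcl => h u v x hcl

lemma add_perf_le {a c : ℝ≥0∞} (hac : a ≤ c)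
    (h : ∀ u v x, ClosedLoop F ν p u v x → a + totalCost g G u v x ≤ c) :
    a + perf F g G ν p ≤ c := by
  rcases eq_or_ne a ⊤ with rfl | ha
  · simp [top_le_iff.1 hac]
  calc a + perf F g G ν p ≤ a + (c - a) :=
        add_le_add_right (perf_le fun u v x hcl => ENNReal.le_sub_of_add_le_left ha (h u v x hcl)) a
    _ = c := add_tsub_cancel_of_le hac

end Perf

section Controllers

def continuation (ν : ℕ → (ℕ → X) → (ℕ → U) → Set (U × Bool)) (s : ℕ) (x : ℕ → X) (u : ℕ → U) :
    ℕ → (ℕ → X) → (ℕ → U) → Set (U × Bool) :=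
  fun t y w => ν (s + t) (splice s x y) (splice s u w)

lemma IsController.continuation (hν : IsController ν) (s : ℕ) (x : ℕ → X) (u : ℕ → U) :
    IsController (continuation ν s x u) := by
  refine ⟨fun t y w => hν.1 _ _ _, fun t y y' w w' hy hw => hν.2 _ _ _ _ _ ?_ ?_⟩
  · intro r hr
    by_cases h : r < s
    · simp only [splice_of_lt h]
    · simp only [splice, if_neg h]
      exact hy _ (by omega)
  · intro r hr
    by_cases h : r < s
    · simp only [splice_of_lt h]
    · simp only [splice, if_neg h]
      exact hw _ (by omega)

lemma continuation_ofMemoryless (μ : X → Set (U × Bool)) (s : ℕ) (x : ℕ → X) (u : ℕ → U) :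
    continuation (ofMemoryless μ) s x u = ofMemoryless μ := by
  funext t y w
  simp [continuation, ofMemoryless]

lemma isController_ofMemoryless {μ : X → Set (U × Bool)} (hμ : ∀ q, (μ q).Nonempty) :
    IsController (ofMemoryless μ) :=
  ⟨fun t x _ => hμ (x t), fun t x x' _ _ hx _ => by simp only [ofMemoryless, hx t le_rfl]⟩

lemma composed_isController {μ₁ μ₂ : X → Set (U × Bool)} (hμ₁ : ∀ q, (μ₁ q).Nonempty)
    (hμ₂ : ∀ q, (μ₂ q).Nonempty) : IsController (composed μ₁ μ₂) := by
  refine ⟨fun t x u => ?_, fun t x x' u u' hx _ => ?_⟩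
  · unfold composed
    split_ifs
    exacts [hμ₁ _, hμ₂ _]
  · have hc : (∀ s ≤ t, ∀ w ∈ μ₁ (x s), w.2 = false) ↔ ∀ s ≤ t, ∀ w ∈ μ₁ (x' s), w.2 = false :=
      forall₂_congr fun s hs => by rw [hx s hs]
    simp only [composed, hc, hx t le_rfl]

def withStop (ν : ℕ → (ℕ → X) → (ℕ → U) → Set (U × Bool)) (b : ℕ → (ℕ → X) → Bool) :
    ℕ → (ℕ → X) → (ℕ → U) → Set (U × Bool) :=
  fun t x u => (fun w => (w.1, b t x)) '' ν t x u

lemma IsController.withStop (hν : IsController ν) {b : ℕ → (ℕ → X) → Bool}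
    (hb : ∀ t x x', (∀ s ≤ t, x s = x' s) → b t x = b t x') : IsController (withStop ν b) :=
  ⟨fun t x u => (hν.1 t x u).image _, fun t x x' u u' hx hu => by
    simp only [TwoPhase.withStop, hb t x x' hx, hν.2 t x x' u u' hx hu]⟩

lemma ClosedLoop.of_withStop {b : ℕ → (ℕ → X) → Bool} (h : ClosedLoop F (withStop ν b) p u v x) :
    (∀ t, v t = b t x) ∧ ∃ v', ClosedLoop F ν p u v' x := by
  have hmem : ∀ t, ∃ c, (u t, c) ∈ ν t x u ∧ v t = b t x := fun t => by
    obtain ⟨w, hw, hwu⟩ := h.2 t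
    obtain ⟨hw₁, hw₂⟩ := Prod.mk.inj hwu
    refine ⟨w.2, ?_, hw₂.symm⟩
    rw [← hw₁]
    exact hw
  choose v' hv' hvb using hmem
  exact ⟨hvb, v', h.1, hv'⟩

noncomputable def firstEntry (A : Set X) (t : ℕ) (x : ℕ → X) : Bool :=
  decide (x t ∈ A ∧ ∀ r < t, x r ∉ A)

lemma firstEntry_congr (A : Set X) (t : ℕ) (x x' : ℕ → X) (hx : ∀ s ≤ t, x s = x' s) :
    firstEntry A t x = firstEntry A t x' := by
  have hr : ∀ r < t, x r = x' r := fun r hr => hx r hr.le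
  simp only [firstEntry, hx t le_rfl]
  congr 1
  exact propext (and_congr_right fun _ => forall₂_congr fun r hrt => by rw [hr r hrt])

end Controllers

section ClosedLoops

lemma exists_closedLoop_ofMemoryless (hF : ∀ x u, (F x u).Nonempty) {μ : X → Set (U × Bool)}
    (hμ : ∀ q, (μ q).Nonempty) (q : X) : ∃ u v x, ClosedLoop F (ofMemoryless μ) q u v x := by
  choose c hc using hμ
  choose f hf using hF
  let x : ℕ → X := fun n => Nat.rec q (fun _ y => f y (c y).1) n
  exact ⟨fun t => (c (x t)).1, fun t => (c (x t)).2, x, ⟨rfl, fun t => hf _ _⟩, fun t => hc _⟩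

lemma ClosedLoop.splice (hν : IsController ν) {s : ℕ} (h0 : x 0 = p)
    (hstep : ∀ t < s, x (t + 1) ∈ F (x t) (u t)) (hctl : ∀ t < s, (u t, v t) ∈ ν t x u)
    (hcl : ClosedLoop F (continuation ν s x u) (x s) u' v' x') :
    ClosedLoop F ν p (splice s u u') (splice s v v') (splice s x x') := by
  obtain ⟨⟨hx'0, hstep'⟩, hctl'⟩ := hcl
  refine ⟨⟨(splice_of_le hx'0 (Nat.zero_le s)).trans h0, fun r => ?_⟩, fun r => ?_⟩
  · rcases lt_or_ge r s with h | h
    · rw [splice_of_le hx'0 h, splice_of_lt h, splice_of_lt h]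
      exact hstep r h
    · obtain ⟨n, rfl⟩ := Nat.exists_eq_add_of_le h
      simpa only [add_assoc, splice_add] using hstep' n
  · rcases lt_or_ge r s with h | h
    · rw [splice_of_lt h, splice_of_lt h, hν.2 r _ x _ u (fun q hq => splice_of_lt (hq.trans_lt h))
        (fun q hq => splice_of_lt (hq.trans h))]
      exact hctl r h
    · obtain ⟨n, rfl⟩ := Nat.exists_eq_add_of_le h
      simp only [splice_add]
      exact hctl' n

lemma sum_range_splice (s : ℕ) (hx : x' 0 = x s) :
    ∑ t ∈ range s, g (splice s x x' t) (splice s x x' (t + 1)) (splice s u u' t) =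
      ∑ t ∈ range s, g (x t) (x (t + 1)) (u t) :=
  sum_congr rfl fun t ht => by
    have ht : t < s := mem_range.1 ht
    rw [splice_of_lt ht, splice_of_le hx ht, splice_of_lt ht]

end ClosedLoops

section TwoPhaseCost

variable {A₁ A₂ : Set X} {G₀ : X → ℝ≥0∞}

lemma totalCost_twoPhaseCost {s : ℕ} (hA : x s ∈ A₁) (hv : ∀ t < s, v t = false) :
    totalCost g (twoPhaseCost A₁ A₂ G₀) u v x = ∑ t ∈ range s, g (x t) (x (t + 1)) (u t) +
      totalCost g (reachAvoidCost A₂ G₀) (fun t => u (s + t)) (fun t => v (s + t))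
        (fun t => x (s + t)) :=
  totalCost_eq_sum_add_totalCost_shift s hv fun t => by
    have hA₁ : ∃ r ≤ s + t, x r ∈ A₁ := ⟨s, Nat.le_add_right s t, hA⟩
    simp [twoPhaseCost, reachAvoidCost, hA₁]

lemma exists_firstEntry_of_totalCost_ne_top
    (h : totalCost g (twoPhaseCost A₁ A₂ G₀) u v x ≠ ⊤) :
    ∃ s, x s ∈ A₁ ∧ (∀ r < s, x r ∉ A₁) ∧ ∀ t < s, v t = false := by
  rw [totalCost] at h
  split_ifs at h with hv
  · have hA : ∃ s ≤ Nat.find hv, x s ∈ A₁ := by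
      by_contra hA
      exact h (by simp only [twoPhaseCost, hA, false_and, if_false, add_top])
    have hA' : ∃ s, x s ∈ A₁ := hA.imp fun _ => And.right
    refine ⟨Nat.find hA', Nat.find_spec hA', fun r => Nat.find_min hA', fun t ht => ?_⟩
    obtain ⟨s, hs, hsA⟩ := hA
    simpa using Nat.find_min hv (ht.trans_le ((Nat.find_min' hA' hsA).trans hs))
  · exact absurd rfl h

/-- Dynamic programming at the entry time `s`: each closed loop of the continuation, spliced
onto `(u, v, x)` at `s`, is a closed loop of `ν` whose two-phase cost splits at `s`. -/
lemma sum_add_perf_continuation_le (hν : IsController ν) (hcl : ClosedLoop F ν p u v x) {s : ℕ}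
    (hA : x s ∈ A₁) (hv : ∀ t < s, v t = false) :
    ∑ t ∈ range s, g (x t) (x (t + 1)) (u t) +
        perf F g (reachAvoidCost A₂ G₀) (continuation ν s x u) (x s) ≤
      perf F g (twoPhaseCost A₁ A₂ G₀) ν p := by
  have hsum_le :
      ∑ t ∈ range s, g (x t) (x (t + 1)) (u t) ≤ totalCost g (twoPhaseCost A₁ A₂ G₀) u v x := by
    rw [totalCost_twoPhaseCost hA hv]
    exact le_self_add
  refine add_perf_le (hsum_le.trans (totalCost_le_perf hcl)) fun u' v' x' hcl' => ?_
  have hx'0 : x' 0 = x s := hcl'.1.1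
  have hcl_splice := hcl'.splice hν hcl.1.1 (fun t _ => hcl.1.2 t) (fun t _ => hcl.2 t)
  have hA_splice : splice s x x' s ∈ A₁ := by rwa [splice_of_le hx'0 le_rfl]
  have hv_splice : ∀ t < s, splice s v v' t = false := fun t ht => (splice_of_lt ht).trans (hv t ht)
  have hcost := totalCost_twoPhaseCost (g := g) (G₀ := G₀) (A₂ := A₂) (u := splice s u u')
    hA_splice hv_splice
  simp only [splice_add, sum_range_splice s hx'0] at hcost
  exact hcost ▸ totalCost_le_perf hcl_splice

theorem value_reachAvoidCost_le_value_twoPhaseCost {L : X → ℝ≥0∞}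
    (hL : ∀ q, L q ≤ value F g (reachAvoidCost A₂ G₀) q) (p : X) :
    value F g (reachAvoidCost A₁ L) p ≤ value F g (twoPhaseCost A₁ A₂ G₀) p := by
  refine le_iInf₂ fun ν hν => (iInf₂_le _ (hν.withStop (firstEntry_congr A₁))).trans <|
    perf_le fun u w x hcl₁ => ?_
  obtain ⟨hw, v, hcl⟩ := hcl₁.of_withStop
  rcases eq_or_ne (totalCost g (twoPhaseCost A₁ A₂ G₀) u v x) ⊤ with htop | hfin
  · exact le_top.trans (htop ▸ totalCost_le_perf hcl)
  obtain ⟨s, hA, hmin, hv⟩ := exists_firstEntry_of_totalCost_ne_top hfin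
  have hws : w s = true := by simpa [hw, firstEntry, hA] using hmin
  have hwlt : ∀ t < s, w t = false := fun t ht => by simp [hw, firstEntry, hmin t ht]
  calc totalCost g (reachAvoidCost A₁ L) u w x
      = ∑ t ∈ range s, g (x t) (x (t + 1)) (u t) + L (x s) := by
        rw [totalCost_of_first_stop hws hwlt, reachAvoidCost, if_pos hA]
    _ ≤ ∑ t ∈ range s, g (x t) (x (t + 1)) (u t) +
          perf F g (reachAvoidCost A₂ G₀) (continuation ν s x u) (x s) := by
        gcongr
        exact (hL _).trans (iInf₂_le _ (hν.continuation s x u))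
    _ ≤ _ := sum_add_perf_continuation_le hν hcl hA hv

lemma sum_add_reachAvoidCost_le_perf_ofMemoryless (hF : ∀ x u, (F x u).Nonempty)
    {μ : X → Set (U × Bool)} (hμ : ∀ q, (μ q).Nonempty) {A : Set X} {L : X → ℝ≥0∞} {T : ℕ}
    (h0 : x 0 = p) (hstep : ∀ t < T, x (t + 1) ∈ F (x t) (u t))
    (hctl : ∀ t < T, (u t, v t) ∈ μ (x t)) (hv : ∀ t < T, v t = false)
    (hstop : ∀ w ∈ μ (x T), w.2 = true) :
    ∑ t ∈ range T, g (x t) (x (t + 1)) (u t) + reachAvoidCost A L T x ≤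
      perf F g (reachAvoidCost A L) (ofMemoryless μ) p := by
  obtain ⟨u', v', x', hcl'⟩ := exists_closedLoop_ofMemoryless hF hμ (x T)
  have hx'0 : x' 0 = x T := hcl'.1.1
  have hcl : ClosedLoop F (ofMemoryless μ) p (splice T u u') (splice T v v') (splice T x x') :=
    ClosedLoop.splice (isController_ofMemoryless hμ) h0 hstep hctl
      (by rwa [continuation_ofMemoryless])
  have hstopT : splice T v v' T = true := by
    simpa using (splice_add T 0 v v').trans (hstop _ (by rw [← hx'0]; exact hcl'.2 0))
  have hcost := totalCost_of_first_stop (g := g) (G := reachAvoidCost A L) (u := splice T u u')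
    (x := splice T x x') hstopT fun t ht => (splice_of_lt ht).trans (hv t ht)
  simp only [sum_range_splice T hx'0, reachAvoidCost, splice_of_le hx'0 le_rfl] at hcost
  exact hcost ▸ totalCost_le_perf hcl

lemma perf_composed_le (hF : ∀ x u, (F x u).Nonempty) {μ₁ μ₂ : X → Set (U × Bool)}
    (hμ₁ : ∀ q, (μ₁ q).Nonempty) (hsv : SVStop μ₁) (p : X) :
    perf F g (twoPhaseCost A₁ A₂ G₀) (composed μ₁ μ₂) p ≤
      perf F g (reachAvoidCost A₁ (perf F g (reachAvoidCost A₂ G₀) (ofMemoryless μ₂)))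
        (ofMemoryless μ₁) p := by
  refine perf_le fun u v x hcl => ?_
  by_cases hgo : ∀ t, ∀ w ∈ μ₁ (x t), w.2 = false
  · have hplay : ∀ t, (u t, v t) ∈ μ₁ (x t) := fun t => by
      have h := hcl.2 t
      rwa [composed, if_pos fun s _ => hgo s] at h
    have hv : ∀ t, v t = false := fun t => hgo t _ (hplay t)
    rw [totalCost_of_forall_false hv, ← totalCost_of_forall_false hv]
    exact totalCost_le_perf ⟨hcl.1, hplay⟩
  obtain ⟨T, hT, hgoT⟩ : ∃ T, (¬ ∀ w ∈ μ₁ (x T), w.2 = false) ∧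
      ∀ t < T, ∀ w ∈ μ₁ (x t), w.2 = false := by
    rw [not_forall] at hgo
    exact ⟨Nat.find hgo, Nat.find_spec hgo, fun t ht => not_not.1 (Nat.find_min hgo ht)⟩
  have hplay₁ : ∀ t < T, (u t, v t) ∈ μ₁ (x t) := fun t ht => by
    have h := hcl.2 t
    rwa [composed, if_pos fun s hs => hgoT s (hs.trans_lt ht)] at h
  have hplay₂ : ∀ t, (u (T + t), v (T + t)) ∈ μ₂ (x (T + t)) := fun t => by
    have h := hcl.2 (T + t)
    rwa [composed, if_neg fun h => hT (h T (Nat.le_add_right T t))] at h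
  have hv : ∀ t < T, v t = false := fun t ht => hgoT t ht _ (hplay₁ t ht)
  refine le_trans ?_ <| sum_add_reachAvoidCost_le_perf_ofMemoryless hF hμ₁ hcl.1.1
    (fun t _ => hcl.1.2 t) hplay₁ hv ((hsv _).resolve_left hT)
  by_cases hA : x T ∈ A₁
  · rw [totalCost_twoPhaseCost hA hv, reachAvoidCost, if_pos hA]
    gcongr
    exact totalCost_le_perf ⟨⟨rfl, fun t => hcl.1.2 (T + t)⟩, hplay₂⟩
  · simp [reachAvoidCost, hA]

end TwoPhaseCost

end

theorem composed_optimal_general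
    {X U : Type*}
    (F : X → U → Set X) (hF : ∀ x u, (F x u).Nonempty)
    (g : X → X → U → ℝ≥0∞) (G₀ : X → ℝ≥0∞)
    (A₁ A₂ : Set X)
    (μ₂ : X → Set (U × Bool)) (hμ₂ : ∀ q, (μ₂ q).Nonempty)
    (μ₁ : X → Set (U × Bool)) (hμ₁ : ∀ q, (μ₁ q).Nonempty) (hsv : SVStop μ₁)
    (hopt₂ : ∀ q, perf F g (reachAvoidCost A₂ G₀) (ofMemoryless μ₂) q =
      value F g (reachAvoidCost A₂ G₀) q)
    (hopt₁ : ∀ q, perf F g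
        (reachAvoidCost A₁
          (fun r => perf F g (reachAvoidCost A₂ G₀) (ofMemoryless μ₂) r))
        (ofMemoryless μ₁) q =
      value F g
        (reachAvoidCost A₁
          (fun r => perf F g (reachAvoidCost A₂ G₀) (ofMemoryless μ₂) r)) q)
    (p : X) :
    perf F g (twoPhaseCost A₁ A₂ G₀) (composed μ₁ μ₂) p =
      value F g (twoPhaseCost A₁ A₂ G₀) p := by
  refine le_antisymm ?_ (iInf₂_le _ (composed_isController hμ₁ hμ₂))
  calc perf F g (twoPhaseCost A₁ A₂ G₀) (composed μ₁ μ₂) p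
      ≤ perf F g (reachAvoidCost A₁ (perf F g (reachAvoidCost A₂ G₀) (ofMemoryless μ₂)))
          (ofMemoryless μ₁) p := perf_composed_le hF hμ₁ hsv p
    _ = value F g (reachAvoidCost A₁ (perf F g (reachAvoidCost A₂ G₀) (ofMemoryless μ₂))) p :=
        hopt₁ p
    _ ≤ value F g (twoPhaseCost A₁ A₂ G₀) p :=
        value_reachAvoidCost_le_value_twoPhaseCost (fun q => (hopt₂ q).le) p

/-- Theorem 1 of the paper. With `Π`, `Π₁`, `Π₂` and the
composed controller `μ` as in Proposition 1, if additionally `μ₂` is optimal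
for `Π₂` and `μ₁` is optimal for `Π₁`, then `μ` is optimal for `Π`, i.e.
`L(p,μ) = V(p)` for all `p ∈ X`. -/
theorem composed_optimal
    {X U : Type*} [Nonempty X] [Nonempty U]
    (F : X → U → Set X) (hF : ∀ x u, (F x u).Nonempty)
    (g : X → X → U → ℝ≥0∞) (G₀ : X → ℝ≥0∞)
    (A₁ A₂ : Set X) (hA₁ : A₁.Nonempty) (hA₂ : A₂.Nonempty)
    (μ₂ : X → Set (U × Bool)) (hμ₂ : ∀ q, (μ₂ q).Nonempty)
    (μ₁ : X → Set (U × Bool)) (hμ₁ : ∀ q, (μ₁ q).Nonempty) (hsv : SVStop μ₁)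
    (hopt₂ : ∀ q, perf F g (reachAvoidCost A₂ G₀) (ofMemoryless μ₂) q =
      value F g (reachAvoidCost A₂ G₀) q)
    (hopt₁ : ∀ q, perf F g
        (reachAvoidCost A₁
          (fun r => perf F g (reachAvoidCost A₂ G₀) (ofMemoryless μ₂) r))
        (ofMemoryless μ₁) q =
      value F g
        (reachAvoidCost A₁
          (fun r => perf F g (reachAvoidCost A₂ G₀) (ofMemoryless μ₂) r)) q)
    (p : X) :
    perf F g (twoPhaseCost A₁ A₂ G₀) (composed μ₁ μ₂) p =
      value F g (twoPhaseCost A₁ A₂ G₀) p :=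
  composed_optimal_general F hF g G₀ A₁ A₂ μ₂ hμ₂ μ₁ hμ₁ hsv hopt₂ hopt₁ p

end TwoPhase
end

section
/- Let S = (X,U,F) and S' = (X',U',F') be transition systems such that: (i) X' is a cover of X by nonempty subsets of X; (ii) U' ⊆ U; (iii) for all Ω, Ω' ∈ X' and u ∈ U', if Ω' ∩ (⋃_{y∈Ω} F(y,u)) ≠ ∅ then Ω' ∈ F'(Ω,u). Let μ' be a memoryless controller for S' and let Q : X → Set X' be the quantizer defined by Ω ∈ Q(p) ⟺ p ∈ Ω, and let μ'∘Q be the memoryless controller on X mapping p to ⋃_{Ω ∋ p} μ'(Ω). Then for every p ∈ X and every closed-loop signal (u,v,x) ∈ B_p((μ'∘Q) × S), there exists a signal Ω ∈ (X')^ℕ such that p ∈ Ω(0), x(t) ∈ Ω(t) for all t ∈ ℕ, and (u,v,Ω) ∈ B_{Ω(0)}(μ' × S'). -/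
open scoped ENNReal Classical

namespace TwoPhase

/-! At every time `t` the value `(u t, v t)` of the refined controller comes from `μ'` at some
cell containing `x t`; choosing such a cell `Ω t` for every `t` gives the abstract signal. It is a
trajectory of `S'` by condition (iii), since `x (t+1)` lies in `Ω (t+1) ∩ F (x t) (u t)`. -/

section

variable {X U : Type*} {XA : Set (Set X)} {UA : Set U}

theorem mem_refineCtrl {μ' : ↥XA → Set (↥UA × Bool)} {q : X} {a : U} {b : Bool} :
    (a, b) ∈ refineCtrl μ' q ↔
      ∃ Ω : ↥XA, q ∈ (Ω : Set X) ∧ ∃ a' : ↥UA, (a' : U) = a ∧ (a', b) ∈ μ' Ω := by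
  simp only [refineCtrl, Set.mem_iUnion, Set.mem_image, Prod.ext_iff, exists_prop]
  constructor
  · rintro ⟨Ω, hqΩ, w, hw, hw₁, hw₂⟩
    exact ⟨Ω, hqΩ, w.1, hw₁, hw₂ ▸ hw⟩
  · rintro ⟨Ω, hqΩ, a', ha', hμ⟩
    exact ⟨Ω, hqΩ, (a', b), hμ, ha', rfl⟩

theorem Behaviour.lift_cells {F : X → U → Set X} {F' : ↥XA → ↥UA → Set ↥XA}
    (hiii : ∀ (Ω Ω' : ↥XA) (u : ↥UA),
      ((Ω' : Set X) ∩ ⋃ y ∈ (Ω : Set X), F y u).Nonempty → Ω' ∈ F' Ω u)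
    {p : X} {u : ℕ → U} {x : ℕ → X} (hx : Behaviour F p u x)
    {Ω : ℕ → ↥XA} {u' : ℕ → ↥UA} (hu : ∀ t, (u' t : U) = u t)
    (hxΩ : ∀ t, x t ∈ (Ω t : Set X)) :
    Behaviour F' (Ω 0) u' Ω :=
  ⟨rfl, fun t => hiii _ _ _
    ⟨x (t + 1), hxΩ (t + 1), Set.mem_biUnion (hxΩ t) ((hu t).symm ▸ hx.2 t)⟩⟩

end

theorem closedLoop_refined_traced_general
    {X U : Type*}
    (F : X → U → Set X)
    (XA : Set (Set X)) (UA : Set U)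
    (F' : ↥XA → ↥UA → Set ↥XA)
    (hiii : ∀ (Ω Ω' : ↥XA) (u : ↥UA),
      ((Ω' : Set X) ∩ ⋃ y ∈ (Ω : Set X), F y u).Nonempty → Ω' ∈ F' Ω u)
    (μ' : ↥XA → Set (↥UA × Bool))
    (p : X) (u : ℕ → U) (v : ℕ → Bool) (x : ℕ → X)
    (hcl : ClosedLoop F (ofMemoryless (refineCtrl μ')) p u v x) :
    ∃ (Ω : ℕ → ↥XA) (u' : ℕ → ↥UA),
      (∀ t, (u' t : U) = u t) ∧
      p ∈ ((Ω 0 : ↥XA) : Set X) ∧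
      (∀ t, x t ∈ ((Ω t : ↥XA) : Set X)) ∧
      ClosedLoop F' (ofMemoryless μ') (Ω 0) u' v Ω := by
  obtain ⟨hbeh, hctrl⟩ := hcl
  choose Ω hxΩ u' hu hμ using fun t => mem_refineCtrl.mp (hctrl t)
  exact ⟨Ω, u', hu, hbeh.1 ▸ hxΩ 0, hxΩ, hbeh.lift_cells hiii hu hxΩ, hμ⟩

/-- [Th. V.4] of Reissig-Weber-Rungger, as used in the proof of
Theorem 3.  Let `S = (X,U,F)` and `S' = (X',U',F')` be transition systems with
`X'` a cover of `X` by nonempty sets, `U' ⊆ U`, and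
`Ω' ∩ F(Ω,u) ≠ ∅ ⇒ Ω' ∈ F'(Ω,u)`.  Let `μ'` be a memoryless controller for
`S'` and `μ'∘Q` the refined controller.  Then every closed-loop signal
`(u,v,x) ∈ B_p((μ'∘Q) × S)` is traced by an abstract signal `Ω` with
`p ∈ Ω 0`, `x t ∈ Ω t` for all `t`, and `(u,v,Ω) ∈ B_{Ω 0}(μ' × S')`. -/
theorem closedLoop_refined_traced
    {X U : Type*} [Nonempty X] [Nonempty U]
    (F : X → U → Set X) (hF : ∀ x u, (F x u).Nonempty)
    (XA : Set (Set X)) (UA : Set U)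
    (hcover : ∀ p : X, ∃ Ω ∈ XA, p ∈ Ω) (hΩne : ∀ Ω ∈ XA, Ω.Nonempty)
    (F' : ↥XA → ↥UA → Set ↥XA) (hF' : ∀ Ω u, (F' Ω u).Nonempty)
    (hiii : ∀ (Ω Ω' : ↥XA) (u : ↥UA),
      ((Ω' : Set X) ∩ ⋃ y ∈ (Ω : Set X), F y u).Nonempty → Ω' ∈ F' Ω u)
    (μ' : ↥XA → Set (↥UA × Bool)) (hμ' : ∀ Ω, (μ' Ω).Nonempty)
    (p : X) (u : ℕ → U) (v : ℕ → Bool) (x : ℕ → X)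
    (hcl : ClosedLoop F (ofMemoryless (refineCtrl μ')) p u v x) :
    ∃ (Ω : ℕ → ↥XA) (u' : ℕ → ↥UA),
      (∀ t, (u' t : U) = u t) ∧
      p ∈ ((Ω 0 : ↥XA) : Set X) ∧
      (∀ t, x t ∈ ((Ω t : ↥XA) : Set X)) ∧
      ClosedLoop F' (ofMemoryless μ') (Ω 0) u' v Ω :=
  closedLoop_refined_traced_general F XA UA F' hiii μ' p u v x hcl

end TwoPhase
end
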